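/- Let G be a discrete group and X a Hausdorff topological space with a continuous topological partial action of G. Then the enveloping space X_G = (G × X)/R is T1. -/

import Mathlib

open Set

structure PartialAction (G : Type*) (X : Type*) [Group G] where
  D : G → Set X
  act : G → X → X
  D_one : D 1 = Set.univ
  act_one : ∀ x, act 1 x = x
  bijOn : ∀ g : G, Set.BijOn (act g) (D g⁻¹) (D g)
  image_inter : ∀ g h : G, act g '' (D g⁻¹ ∩ D h) = D g ∩ D (g * h)
  comp : ∀ g h : G, ∀ x ∈ D h⁻¹ ∩ D (h⁻¹ * g⁻¹), act g (act h x) = act (g * h) x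

/-- The domain `G*X = {(g,x) : x ∈ X_{g⁻¹}}` of a partial action. -/
def PartialAction.domSet {G X : Type*} [Group G] (pa : PartialAction G X) : Set (G × X) :=
  {p : G × X | p.2 ∈ pa.D p.1⁻¹}

/-- The relation `R` on `G × X`: `(g,x) R (h,y)` iff `x ∈ X_{g⁻¹h}` and `η_{h⁻¹g}(x) = y`. -/
def PartialAction.envRel {G X : Type*} [Group G] (pa : PartialAction G X) :
    G × X → G × X → Prop :=
  fun p q => p.2 ∈ pa.D (p.1⁻¹ * q.1) ∧ pa.act (q.1⁻¹ * p.1) p.2 = q.2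

/-- The orbit equivalence relation of a partial action. -/
def PartialAction.orbitRel {G X : Type*} [Group G] (pa : PartialAction G X) : X → X → Prop :=
  fun x y => ∃ g : G, x ∈ pa.D g⁻¹ ∧ pa.act g x = y

/-- A topological partial action: open domains, each `η_g` a homeomorphism onto its image. -/
structure TopPartialAction (G : Type*) (X : Type*) [Group G] [TopologicalSpace G]
    [TopologicalSpace X] extends PartialAction G X where
  isOpen_D : ∀ g : G, IsOpen (D g)
  continuousOn_act : ∀ g : G, ContinuousOn (act g) (D g⁻¹)

/-- A continuous topological partial action: the evaluation map on `G*X` is continuous. -/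
structure ContPartialAction (G : Type*) (X : Type*) [Group G] [TopologicalSpace G]
    [TopologicalSpace X] extends TopPartialAction G X where
  continuousOn_eval :
    ContinuousOn (fun p : G × X => act p.1 p.2) {p : G × X | p.2 ∈ D p.1⁻¹}

/-! A point `(g, x)` is `R`-related to `(h, y)` only if `x = η_{g⁻¹h} y`, so the preimage in
`G × X` of the class of `(h, y)` meets each slice `{g} × X` in at most one point. Points of the
Hausdorff space `X` are closed, and since `G` is discrete a subset of `G × X` whose slices are all
closed is closed; the class is therefore a closed point of the quotient. -/

namespace PartialAction

variable {G X : Type*} [Group G] (pa : PartialAction G X)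

theorem act_inv_act {g : G} {x : X} (hx : x ∈ pa.D g⁻¹) : pa.act g⁻¹ (pa.act g x) = x := by
  rw [pa.comp g⁻¹ g x ⟨hx, by simp [pa.D_one]⟩, inv_mul_cancel, pa.act_one]

theorem mem_D_mul_inv_and_act_mul {a b : G} {x : X} (hx : x ∈ pa.D a⁻¹)
    (hax : pa.act a x ∈ pa.D b⁻¹) :
    x ∈ pa.D (b * a)⁻¹ ∧ pa.act (b * a) x = pa.act b (pa.act a x) := by
  have hmem : x ∈ pa.D (a⁻¹ * b⁻¹) := by
    have hx' : pa.act a⁻¹ (pa.act a x) ∈ pa.act a⁻¹ '' (pa.D a⁻¹⁻¹ ∩ pa.D b⁻¹) :=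
      ⟨_, ⟨by simpa using (pa.bijOn a).mapsTo hx, hax⟩, rfl⟩
    rw [pa.image_inter, pa.act_inv_act hx] at hx'
    exact hx'.2
  exact ⟨by rwa [mul_inv_rev], (pa.comp b a x ⟨hx, hmem⟩).symm⟩

theorem envRel_mk_iff {g h : G} {x y : X} :
    pa.envRel (g, x) (h, y) ↔ x ∈ pa.D (h⁻¹ * g)⁻¹ ∧ pa.act (h⁻¹ * g) x = y := by
  simp [envRel]

theorem envRel_refl (p : G × X) : pa.envRel p p := by
  simp [envRel, pa.D_one, pa.act_one]

theorem envRel_symm {p q : G × X} (hpq : pa.envRel p q) : pa.envRel q p := by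
  obtain ⟨g, x⟩ := p
  obtain ⟨h, y⟩ := q
  rw [envRel_mk_iff] at hpq ⊢
  obtain ⟨hx, rfl⟩ := hpq
  have hinv : g⁻¹ * h = (h⁻¹ * g)⁻¹ := by simp
  rw [hinv, inv_inv]
  exact ⟨(pa.bijOn _).mapsTo hx, pa.act_inv_act hx⟩

theorem envRel_trans {p q r : G × X} (hpq : pa.envRel p q) (hqr : pa.envRel q r) :
    pa.envRel p r := by
  obtain ⟨g, x⟩ := p
  obtain ⟨h, y⟩ := q
  obtain ⟨k, z⟩ := r
  rw [envRel_mk_iff] at hpq hqr ⊢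
  obtain ⟨hx, rfl⟩ := hpq
  obtain ⟨hy, rfl⟩ := hqr
  have hmul : k⁻¹ * h * (h⁻¹ * g) = k⁻¹ * g := by group
  rw [← hmul]
  exact pa.mem_D_mul_inv_and_act_mul hx hy

theorem envRel_equivalence : Equivalence pa.envRel :=
  ⟨pa.envRel_refl, pa.envRel_symm, pa.envRel_trans⟩

theorem subsingleton_setOf_envRel_mk (g : G) (q : G × X) :
    {x : X | pa.envRel (g, x) q}.Subsingleton := by
  rintro x ⟨hx, hxq⟩ x' ⟨hx', hx'q⟩
  exact (pa.bijOn (q.1⁻¹ * g)).injOn (by simpa using hx) (by simpa using hx')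
    (hxq.trans hx'q.symm)

end PartialAction

theorem Equivalence.preimage_quot_mk_singleton {α : Type*} {r : α → α → Prop}
    (hr : Equivalence r) (a : α) : Quot.mk r ⁻¹' {Quot.mk r a} = {b | r b a} := by
  ext b
  simp [Quot.eq, hr.eqvGen_iff]

theorem isClosed_of_forall_isClosed_preimage_prodMk {G X : Type*} [TopologicalSpace G]
    [DiscreteTopology G] [TopologicalSpace X] {s : Set (G × X)}
    (hs : ∀ g, IsClosed (Prod.mk g ⁻¹' s)) : IsClosed s := by
  have hcompl : sᶜ = ⋃ g, {g} ×ˢ (Prod.mk g ⁻¹' s)ᶜ := by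
    ext ⟨g, x⟩
    simp
  rw [← isOpen_compl_iff, hcompl]
  exact isOpen_iUnion fun g => (isOpen_discrete _).prod (hs g).isOpen_compl

/-- For a discrete group acting partially on a Hausdorff space, the enveloping
space is T1. -/
theorem statement7 {G X : Type*} [Group G] [TopologicalSpace G] [DiscreteTopology G]
    [TopologicalSpace X] [T2Space X] (pa : ContPartialAction G X) :
    T1Space (Quot pa.envRel) := by
  refine ⟨Quot.ind fun q => ?_⟩
  rw [← isQuotientMap_quot_mk.isClosed_preimage,
    pa.envRel_equivalence.preimage_quot_mk_singleton]
  exact isClosed_of_forall_isClosed_preimage_prodMk fun g =>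
    (pa.subsingleton_setOf_envRel_mk g q).isClosed
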